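/- arXiv:2105.06553 — 3 statements merged into one kernel-verified Lean document; each statement's English description precedes it below -/
import Mathlib

section
/- Let N and k be positive integers with k even, 4 ≤ k, and N > 3k/2. The local clustering coefficient of every vertex of the circulant graph C_{N,k} equals 3(k-2)/(4(k-1)); in particular, the (average) clustering coefficient of C_{N,k} equals 3(k-2)/(4(k-1)). -/
open scoped Classical

/-- Circular distance between two elements of `ZMod N`. -/
def circDist {N : ℕ} (i j : ZMod N) : ℕ := min (i - j).val (j - i).val

/-- The circulant graph `C_{N,k}`: vertices `ZMod N`, `i ~ j` iff the circular
distance between `i` and `j` lies in `{1, ..., k/2}`. -/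
def circulant (N k : ℕ) : SimpleGraph (ZMod N) where
  Adj i j := 1 ≤ circDist i j ∧ circDist i j ≤ k / 2
  symm := ⟨by intro i j h; simpa [circDist, min_comm] using h⟩
  loopless := ⟨by intro i h; simp [circDist] at h⟩

/-- Number of edges among the neighbors of `v`. -/
noncomputable def nbrEdges {V : Type*} [Fintype V] (G : SimpleGraph V) (v : V) : ℕ :=
  (Finset.univ.filter fun p : V × V => G.Adj v p.1 ∧ G.Adj v p.2 ∧ G.Adj p.1 p.2).card / 2

/-- Local clustering coefficient of a vertex. -/
noncomputable def localClustering {V : Type*} [Fintype V] (G : SimpleGraph V) (v : V) : ℚ :=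
  (nbrEdges G v : ℚ) / ((G.degree v).choose 2 : ℚ)

/-- (Average) clustering coefficient of a graph. -/
noncomputable def clusteringCoeff {V : Type*} [Fintype V] (G : SimpleGraph V) : ℚ :=
  (∑ v, localClustering G v) / (Fintype.card V : ℚ)

lemma adj_iff (N m : ℕ) [NeZero N] (hm : 2 ≤ m) (hN : 3*m < N) (i j : ℤ)
    (hij : i.natAbs ≤ m) (hji : j.natAbs ≤ m) :
    (circulant N (2*m)).Adj (i : ZMod N) (j : ZMod N) ↔ i ≠ j ∧ (i - j).natAbs ≤ m := by
  have hcd : circDist (i : ZMod N) (j : ZMod N)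
      = min ((ZMod.val ((i - j : ℤ) : ZMod N))) ((ZMod.val ((j - i : ℤ) : ZMod N))) := by
    simp [circDist]
  have h1 : ((ZMod.val ((i - j : ℤ) : ZMod N)) : ℤ) = (i - j) % N := ZMod.val_intCast _
  have h2 : ((ZMod.val ((j - i : ℤ) : ZMod N)) : ℤ) = (j - i) % N := ZMod.val_intCast _
  have hNpos : (0:ℤ) < N := by exact_mod_cast Nat.pos_of_ne_zero (NeZero.ne N)
  have e1 : (i - j) % N = i - j ∨ (i - j) % N = i - j + N := by
    rcases le_or_gt 0 (i - j) with h | h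
    · left; exact Int.emod_eq_of_lt h (by omega)
    · right
      have : (i - j) % N = (i - j + N * 1) % N := by rw [Int.add_mul_emod_self_left]
      rw [this, Int.emod_eq_of_lt (by omega) (by omega)]; ring
  have e2 : (j - i) % N = j - i ∨ (j - i) % N = j - i + N := by
    rcases le_or_gt 0 (j - i) with h | h
    · left; exact Int.emod_eq_of_lt h (by omega)
    · right
      have : (j - i) % N = (j - i + N * 1) % N := by rw [Int.add_mul_emod_self_left]
      rw [this, Int.emod_eq_of_lt (by omega) (by omega)]; ring
  have b1 : 0 ≤ (i - j) % N ∧ (i - j) % N < N :=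
    ⟨Int.emod_nonneg _ (by omega), Int.emod_lt_of_pos _ hNpos⟩
  have b2 : 0 ≤ (j - i) % N ∧ (j - i) % N < N :=
    ⟨Int.emod_nonneg _ (by omega), Int.emod_lt_of_pos _ hNpos⟩
  have hk2 : 2 * m / 2 = m := by omega
  constructor
  · rintro ⟨ha, hb⟩
    rw [hcd, le_min_iff] at ha
    rw [hcd, hk2, min_le_iff] at hb
    rcases e1 with e1|e1 <;> rcases e2 with e2|e2 <;>
      exact ⟨by rintro rfl; omega, by omega⟩
  · rintro ⟨hne, habs⟩
    refine ⟨?_, ?_⟩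
    · rw [hcd, le_min_iff]
      rcases e1 with e1|e1 <;> rcases e2 with e2|e2 <;> omega
    · rw [hcd, hk2, min_le_iff]
      rcases e1 with e1|e1 <;> rcases e2 with e2|e2 <;> omega

lemma cast_injOn (N m : ℕ) [NeZero N] (hN : 3*m < N) :
    ∀ a ∈ Finset.Icc (-(m:ℤ)) m, ∀ b ∈ Finset.Icc (-(m:ℤ)) m,
      (a : ZMod N) = (b : ZMod N) → a = b := by
  intro a ha b hb h
  rw [Finset.mem_Icc] at ha hb
  have hdvd : (N:ℤ) ∣ b - a := by
    rwa [ZMod.intCast_eq_intCast_iff, Int.modEq_iff_dvd] at h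
  by_contra hne
  have hx : b - a ≠ 0 := by omega
  have h1 : (N:ℤ) ≤ |b - a| := Int.le_of_dvd (abs_pos.mpr hx) ((dvd_abs _ _).mpr hdvd)
  have h2 : |b - a| ≤ 2*m := abs_le.mpr (by omega)
  omega

lemma exists_rep (N m : ℕ) [NeZero N] (hm : 2 ≤ m) (hN : 3*m < N) (x : ZMod N)
    (hx : (circulant N (2*m)).Adj 0 x) :
    ∃ j : ℤ, j ∈ (Finset.Icc (-(m:ℤ)) m).erase 0 ∧ (j : ZMod N) = x := by
  obtain ⟨h1, h2⟩ := hx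
  have hk2 : 2 * m / 2 = m := by omega
  rw [hk2] at h2
  have hx0 : x ≠ 0 := by
    rintro rfl; simp [circDist] at h1
  have hv : x.val < N := ZMod.val_lt x
  have hv0 : x.val ≠ 0 := by
    simpa [ZMod.val_eq_zero] using hx0
  have hxv : ((x.val : ℤ) : ZMod N) = x := by
    push_cast
    exact ZMod.natCast_rightInverse x
  have hneg : (0 - x).val = N - x.val := by
    rw [zero_sub, ZMod.neg_val]
    simp [hx0]
  have hpos : (x - 0).val = x.val := by rw [sub_zero]
  rw [circDist, hneg, hpos, min_le_iff] at h2
  rcases h2 with h2 | h2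
  · refine ⟨(x.val : ℤ) - N, ?_, ?_⟩
    · simp only [Finset.mem_erase, Finset.mem_Icc]
      omega
    · push_cast
      simp [ZMod.natCast_rightInverse x]
  · refine ⟨(x.val : ℤ), ?_, hxv⟩
    simp only [Finset.mem_erase, Finset.mem_Icc]
    omega

lemma nbhd (N m : ℕ) [NeZero N] (hm : 2 ≤ m) (hN : 3*m < N) :
    (circulant N (2*m)).neighborFinset 0
      = ((Finset.Icc (-(m:ℤ)) m).erase 0).image (fun j : ℤ => (j : ZMod N)) := by
  ext x
  rw [SimpleGraph.mem_neighborFinset, Finset.mem_image]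
  constructor
  · intro hx
    exact exists_rep N m hm hN x hx
  · rintro ⟨j, hj, rfl⟩
    simp only [Finset.mem_erase, Finset.mem_Icc] at hj
    have h0 : ((0:ℤ) : ZMod N) = 0 := by push_cast; rfl
    rw [← h0]
    rw [adj_iff N m hm hN 0 j (by simp) (by omega)]
    constructor
    · omega
    · omega

lemma degree_zero (N m : ℕ) [NeZero N] (hm : 2 ≤ m) (hN : 3*m < N) :
    (circulant N (2*m)).degree 0 = 2*m := by
  rw [← SimpleGraph.card_neighborFinset_eq_degree, nbhd N m hm hN]
  rw [Finset.card_image_of_injOn (fun a ha b hb h =>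
    cast_injOn N m hN a (Finset.mem_of_mem_erase ha) b (Finset.mem_of_mem_erase hb) h)]
  rw [Finset.card_erase_of_mem (by simp), Int.card_Icc]
  omega

lemma sum_natAbs (m : ℕ) :
    ∑ i ∈ Finset.Icc (-(m:ℤ)) m, (i.natAbs : ℤ) = m*(m+1) := by
  induction m with
  | zero => simp
  | succ m ih =>
    have h : Finset.Icc (-((m+1:ℕ):ℤ)) ((m+1:ℕ):ℤ)
        = insert (-((m+1:ℕ):ℤ)) (insert ((m+1:ℕ):ℤ) (Finset.Icc (-(m:ℤ)) m)) := by
      ext i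
      simp only [Finset.mem_Icc, Finset.mem_insert]
      push_cast
      omega
    rw [h, Finset.sum_insert (by simp only [Finset.mem_insert, Finset.mem_Icc]; push_cast; omega),
        Finset.sum_insert (by simp only [Finset.mem_Icc]; push_cast; omega), ih]
    rw [Int.natAbs_neg, Int.natAbs_natCast]
    push_cast
    ring

lemma inner_card (m : ℕ) (hm : 2 ≤ m) (i : ℤ) (hi : i ∈ (Finset.Icc (-(m:ℤ)) m).erase 0) :
    ((((Finset.Icc (-(m:ℤ)) m).erase 0).filter
        fun j => i ≠ j ∧ (i - j).natAbs ≤ m).card : ℤ) = 2*m - 1 - i.natAbs := by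
  simp only [Finset.mem_erase, Finset.mem_Icc] at hi
  rcases lt_or_gt_of_ne hi.1.symm with hpos | hneg
  -- hpos : 0 < i ; hneg : i < 0  (careful with direction)
  · -- 0 < i
    have hset : (((Finset.Icc (-(m:ℤ)) m).erase 0).filter
        fun j => i ≠ j ∧ (i - j).natAbs ≤ m)
        = ((Finset.Icc (i - m) (m:ℤ)).erase 0).erase i := by
      ext j
      simp only [Finset.mem_filter, Finset.mem_erase, Finset.mem_Icc]
      omega
    rw [hset, Finset.card_erase_of_mem (by simp only [Finset.mem_erase, Finset.mem_Icc]; omega),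
        Finset.card_erase_of_mem (by simp only [Finset.mem_Icc]; omega), Int.card_Icc]
    omega
  · -- i < 0
    have hset : (((Finset.Icc (-(m:ℤ)) m).erase 0).filter
        fun j => i ≠ j ∧ (i - j).natAbs ≤ m)
        = ((Finset.Icc (-(m:ℤ)) (i + m)).erase 0).erase i := by
      ext j
      simp only [Finset.mem_filter, Finset.mem_erase, Finset.mem_Icc]
      omega
    rw [hset, Finset.card_erase_of_mem (by simp only [Finset.mem_erase, Finset.mem_Icc]; omega),
        Finset.card_erase_of_mem (by simp only [Finset.mem_Icc]; omega), Int.card_Icc]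
    omega

lemma Qcard (m : ℕ) (hm : 2 ≤ m) :
    (((((Finset.Icc (-(m:ℤ)) m).erase 0)) ×ˢ (((Finset.Icc (-(m:ℤ)) m).erase 0))).filter
      (fun p : ℤ×ℤ => p.1 ≠ p.2 ∧ (p.1 - p.2).natAbs ≤ m)).card = 3*m*(m-1) := by
  set S := (Finset.Icc (-(m:ℤ)) m).erase 0 with hS
  have hSc : S.card = 2*m := by
    rw [hS, Finset.card_erase_of_mem (by simp), Int.card_Icc]; omega
  have h1 : ((S ×ˢ S).filter
      (fun p : ℤ×ℤ => p.1 ≠ p.2 ∧ (p.1 - p.2).natAbs ≤ m)).card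
      = ∑ i ∈ S, (S.filter fun j => i ≠ j ∧ (i - j).natAbs ≤ m).card := by
    rw [Finset.card_filter, Finset.sum_product]
    exact Finset.sum_congr rfl fun i _ => (Finset.card_filter _ _).symm
  have h2 : (∑ i ∈ S, ((S.filter fun j => i ≠ j ∧ (i - j).natAbs ≤ m).card : ℤ))
      = ∑ i ∈ S, (2*(m:ℤ) - 1 - i.natAbs) :=
    Finset.sum_congr rfl fun i hi => inner_card m hm i hi
  have h4 : (∑ i ∈ S, ((i.natAbs : ℤ))) = m*(m+1) := by
    rw [hS, Finset.sum_erase _ (by simp)]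
    exact sum_natAbs m
  have h3 : (∑ i ∈ S, (2*(m:ℤ) - 1 - i.natAbs)) = 2*m*(2*m-1) - m*(m+1) := by
    rw [Finset.sum_sub_distrib, h4, Finset.sum_const, hSc]
    push_cast; ring
  have h5 : ((((S ×ˢ S).filter
      (fun p : ℤ×ℤ => p.1 ≠ p.2 ∧ (p.1 - p.2).natAbs ≤ m)).card : ℤ))
      = 2*m*(2*m-1) - m*(m+1) := by
    rw [h1]; push_cast [h2, h3] at *
    rw [h2, h3]
  have h6 : ((3*m*(m-1) : ℕ) : ℤ) = 2*m*(2*m-1) - m*(m+1) := by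
    push_cast [Nat.cast_sub (by omega : 1 ≤ m)]
    ring
  exact_mod_cast h5.trans h6.symm

lemma pairs_eq (N m : ℕ) [NeZero N] (hm : 2 ≤ m) (hN : 3*m < N) :
    (Finset.univ.filter fun p : ZMod N × ZMod N =>
       (circulant N (2*m)).Adj 0 p.1 ∧ (circulant N (2*m)).Adj 0 p.2
         ∧ (circulant N (2*m)).Adj p.1 p.2)
    = (((((Finset.Icc (-(m:ℤ)) m).erase 0)) ×ˢ (((Finset.Icc (-(m:ℤ)) m).erase 0))).filter
        (fun p : ℤ×ℤ => p.1 ≠ p.2 ∧ (p.1 - p.2).natAbs ≤ m)).image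
        (fun p : ℤ×ℤ => ((p.1 : ZMod N), (p.2 : ZMod N))) := by
  ext ⟨a, b⟩
  simp only [Finset.mem_filter, Finset.mem_univ, true_and, Finset.mem_image,
    Finset.mem_product, Prod.exists, Prod.mk.injEq]
  constructor
  · rintro ⟨ha, hb, hab⟩
    obtain ⟨i, hi, rfl⟩ := exists_rep N m hm hN a ha
    obtain ⟨j, hj, rfl⟩ := exists_rep N m hm hN b hb
    simp only [Finset.mem_erase, Finset.mem_Icc] at hi hj
    rw [adj_iff N m hm hN i j (by omega) (by omega)] at hab
    refine ⟨i, j, ⟨⟨?_, ?_⟩, hab⟩, rfl, rfl⟩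
    · simp only [Finset.mem_erase, Finset.mem_Icc]; omega
    · simp only [Finset.mem_erase, Finset.mem_Icc]; omega
  · rintro ⟨i, j, ⟨⟨hi, hj⟩, hne, habs⟩, rfl, rfl⟩
    simp only [Finset.mem_erase, Finset.mem_Icc] at hi hj
    have h0 : ((0:ℤ) : ZMod N) = 0 := by push_cast; rfl
    refine ⟨?_, ?_, ?_⟩
    · rw [← h0, adj_iff N m hm hN 0 i (by simp) (by omega)]
      exact ⟨by omega, by omega⟩
    · rw [← h0, adj_iff N m hm hN 0 j (by simp) (by omega)]
      exact ⟨by omega, by omega⟩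
    · rw [adj_iff N m hm hN i j (by omega) (by omega)]
      exact ⟨hne, habs⟩

lemma adj_sub (N k : ℕ) (v x y : ZMod N) :
    (circulant N k).Adj (x - v) (y - v) ↔ (circulant N k).Adj x y := by
  have h : circDist (x - v) (y - v) = circDist x y := by
    simp [circDist, sub_sub_sub_cancel_right]
  show (1 ≤ circDist (x - v) (y - v) ∧ circDist (x - v) (y - v) ≤ k/2) ↔ _
  rw [h]; rfl

lemma adj_zero_sub (N k : ℕ) (v x : ZMod N) :
    (circulant N k).Adj 0 (x - v) ↔ (circulant N k).Adj v x := by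
  have := adj_sub N k v v x
  rwa [sub_self] at this

lemma nbrEdges_translate (N k : ℕ) [NeZero N] (v : ZMod N) :
    nbrEdges (circulant N k) v = nbrEdges (circulant N k) 0 := by
  unfold nbrEdges
  congr 1
  have himg : (Finset.univ.filter fun p : ZMod N × ZMod N =>
      (circulant N k).Adj v p.1 ∧ (circulant N k).Adj v p.2 ∧ (circulant N k).Adj p.1 p.2)
      = (Finset.univ.filter fun p : ZMod N × ZMod N =>
      (circulant N k).Adj 0 p.1 ∧ (circulant N k).Adj 0 p.2
        ∧ (circulant N k).Adj p.1 p.2).image (fun p => (p.1 + v, p.2 + v)) := by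
    ext ⟨a, b⟩
    simp only [Finset.mem_filter, Finset.mem_univ, true_and, Finset.mem_image, Prod.exists,
      Prod.mk.injEq]
    constructor
    · rintro ⟨h1, h2, h3⟩
      refine ⟨a - v, b - v, ⟨?_, ?_, ?_⟩, by ring, by ring⟩
      · rwa [adj_zero_sub]
      · rwa [adj_zero_sub]
      · rwa [adj_sub]
    · rintro ⟨c, d, ⟨h1, h2, h3⟩, rfl, rfl⟩
      refine ⟨?_, ?_, ?_⟩
      · rw [← adj_zero_sub N k v]; simpa using h1
      · rw [← adj_zero_sub N k v]; simpa using h2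
      · rw [← adj_sub N k v]; simpa using h3
  rw [himg, Finset.card_image_of_injective _ (by intro p q h; simpa [Prod.ext_iff] using h)]

lemma degree_translate (N k : ℕ) [NeZero N] (v : ZMod N) :
    (circulant N k).degree v = (circulant N k).degree 0 := by
  rw [← SimpleGraph.card_neighborFinset_eq_degree, ← SimpleGraph.card_neighborFinset_eq_degree]
  have himg : (circulant N k).neighborFinset v
      = ((circulant N k).neighborFinset 0).image (· + v) := by
    ext x
    simp only [SimpleGraph.mem_neighborFinset, Finset.mem_image]
    constructor
    · intro hx
      exact ⟨x - v, (adj_zero_sub N k v x).mpr hx, by ring⟩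
    · rintro ⟨y, hy, rfl⟩
      rw [← adj_zero_sub N k v]; simpa using hy
  rw [himg, Finset.card_image_of_injective _ (add_left_injective v)]

lemma nbrEdges_zero (N m : ℕ) [NeZero N] (hm : 2 ≤ m) (hN : 3*m < N) :
    nbrEdges (circulant N (2*m)) 0 = 3*m*(m-1)/2 := by
  unfold nbrEdges
  rw [pairs_eq N m hm hN, Finset.card_image_of_injOn, Qcard m hm]
  intro p hp q hq h
  simp only [Finset.mem_coe, Finset.mem_filter, Finset.mem_product] at hp hq
  simp only [Prod.mk.injEq] at h
  have h1 := cast_injOn N m hN p.1 (Finset.mem_of_mem_erase hp.1.1)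
    q.1 (Finset.mem_of_mem_erase hq.1.1) h.1
  have h2 := cast_injOn N m hN p.2 (Finset.mem_of_mem_erase hp.1.2)
    q.2 (Finset.mem_of_mem_erase hq.1.2) h.2
  exact Prod.ext h1 h2

lemma local_eq (N m : ℕ) [NeZero N] (hm : 2 ≤ m) (hN : 3*m < N) (v : ZMod N) :
    localClustering (circulant N (2*m)) v
      = 3 * (((2*m : ℕ) : ℚ) - 2) / (4 * (((2*m : ℕ) : ℚ) - 1)) := by
  unfold localClustering
  rw [nbrEdges_translate, degree_translate, nbrEdges_zero N m hm hN, degree_zero N m hm hN]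
  have hch : (2*m).choose 2 = m * (2*m - 1) := by
    rw [Nat.choose_two_right, mul_assoc, Nat.mul_div_cancel_left _ (by norm_num : 0 < 2)]
  rw [hch]
  have hdvd : (2:ℕ) ∣ 3*m*(m-1) := by
    have : Even (m * (m-1)) := by
      rw [mul_comm]
      have := Nat.even_mul_succ_self (m-1)
      simpa [Nat.sub_add_cancel (by omega : 1 ≤ m)] using this
    obtain ⟨c, hc⟩ := this
    exact ⟨3*c, by rw [mul_assoc, hc]; ring⟩
  have hc1 : ((3*m*(m-1)/2 : ℕ) : ℚ) = 3*(m:ℚ)*((m:ℚ)-1)/2 := by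
    rw [Nat.cast_div hdvd (by norm_num)]
    push_cast [Nat.cast_sub (by omega : 1 ≤ m)]
    ring
  have hc2 : ((m * (2*m-1) : ℕ) : ℚ) = (m:ℚ)*(2*(m:ℚ)-1) := by
    push_cast [Nat.cast_sub (by omega : 1 ≤ 2*m)]
    ring
  rw [hc1, hc2]
  have hm0 : (m:ℚ) ≠ 0 := by
    have : (2:ℚ) ≤ (m:ℚ) := by exact_mod_cast hm
    linarith
  have hm1 : 2*(m:ℚ) - 1 ≠ 0 := by
    have : (2:ℚ) ≤ (m:ℚ) := by exact_mod_cast hm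
    linarith
  push_cast
  field_simp
  ring

theorem stmt1 (N k : ℕ) [NeZero N] (hke : Even k) (hk4 : 4 ≤ k) (hN : 2 * N > 3 * k) :
    (∀ v : ZMod N, localClustering (circulant N k) v
        = 3 * ((k : ℚ) - 2) / (4 * ((k : ℚ) - 1))) ∧
    clusteringCoeff (circulant N k) = 3 * ((k : ℚ) - 2) / (4 * ((k : ℚ) - 1)) := by
  have hk2 : k % 2 = 0 := Nat.even_iff.mp hke
  obtain ⟨m, rfl⟩ : ∃ m, k = 2*m := ⟨k/2, by omega⟩
  have hm : 2 ≤ m := by omega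
  have hN' : 3*m < N := by omega
  have hloc : ∀ v : ZMod N, localClustering (circulant N (2*m)) v
      = 3 * (((2*m : ℕ) : ℚ) - 2) / (4 * (((2*m : ℕ) : ℚ) - 1)) :=
    fun v => local_eq N m hm hN' v
  refine ⟨hloc, ?_⟩
  unfold clusteringCoeff
  rw [Finset.sum_congr rfl (fun v _ => hloc v), Finset.sum_const, Finset.card_univ, ZMod.card]
  have hN0 : ((N:ℚ)) ≠ 0 := Nat.cast_ne_zero.mpr (NeZero.ne N)
  rw [nsmul_eq_mul]
  exact mul_div_cancel_left₀ _ hN0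
end

section
/- Let N and k be positive integers with k even, 4 ≤ k, k+1 ≤ N ≤ 3k/2, and set l = N - k - 1. Then for every vertex of the circulant graph C_{N,k}, the number of pairs of neighbors of that vertex that are NOT adjacent equals kl/2 - l(l-1)/2, and hence its local clustering coefficient equals (C(k,2) - kl/2 + l(l-1)/2)/C(k,2). -/
open scoped Classical

namespace CircAux
lemma natCast_val' {N : ℕ} [NeZero N] (x : ZMod N) : ((x.val : ℕ) : ZMod N) = x := by
  rw [ZMod.natCast_val, ZMod.cast_id]
lemma neg_cast {N : ℕ} [NeZero N] (y : ZMod N) : (((N - y.val : ℕ)) : ZMod N) = - y := by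
  have h : ((N - y.val : ℕ) : ZMod N) + ((y.val : ℕ) : ZMod N) = ((N : ℕ) : ZMod N) := by
    rw [← Nat.cast_add, Nat.sub_add_cancel (le_of_lt (ZMod.val_lt y))]
  rw [natCast_val'] at h
  rw [ZMod.natCast_self] at h
  exact eq_neg_of_add_eq_zero_left h
lemma sub_val' {N : ℕ} [NeZero N] (x y : ZMod N) :
    (x - y).val = (x.val + (N - y.val)) % N := by
  have h : x - y = (((x.val + (N - y.val) : ℕ)) : ZMod N) := by
    rw [Nat.cast_add, natCast_val', neg_cast, sub_eq_add_neg]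
  rw [h, ZMod.val_natCast]
lemma circDist_shift {N : ℕ} (v x y : ZMod N) : circDist x y = circDist (x - v) (y - v) := by
  unfold circDist
  rw [show x - v - (y - v) = x - y by ring, show y - v - (x - v) = y - x by ring]
lemma circDist_zero {N : ℕ} [NeZero N] (x : ZMod N) :
    circDist 0 x = min (N - x.val) x.val := by
  unfold circDist
  rw [zero_sub, sub_zero]
  rcases eq_or_ne x 0 with rfl | h
  · simp
  · haveI : NeZero x := ⟨h⟩
    rw [ZMod.val_neg_of_ne_zero]
lemma circDist_eq_min {N : ℕ} [NeZero N] (x y : ZMod N) :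
    circDist x y = min (N - (y - x).val) ((y - x).val) := by
  rw [circDist_shift x x y, sub_self, circDist_zero]
lemma mod2 (x N : ℕ) (h : x < 2 * N) :
    x % N = if x < N then x else x - N := by
  split_ifs with hx
  · exact Nat.mod_eq_of_lt hx
  · rw [Nat.mod_eq_sub_mod (by omega), Nat.mod_eq_of_lt (by omega)]

def Q (N m a b : ℕ) : Prop :=
  (1 ≤ min (N - a) a ∧ min (N - a) a ≤ m) ∧
  (1 ≤ min (N - b) b ∧ min (N - b) b ≤ m) ∧ a ≠ b ∧
  ¬ (1 ≤ min (N - ((b + (N - a)) % N)) ((b + (N - a)) % N) ∧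
     min (N - ((b + (N - a)) % N)) ((b + (N - a)) % N) ≤ m)

lemma card_S (N m l : ℕ) [NeZero N] (hN : N = 2 * m + 1 + l) (hlm : l + 1 ≤ m) (v : ZMod N) :
    (Finset.univ.filter fun p : ZMod N × ZMod N =>
        (circulant N (m + m)).Adj v p.1 ∧ (circulant N (m + m)).Adj v p.2 ∧ p.1 ≠ p.2 ∧
          ¬ (circulant N (m + m)).Adj p.1 p.2).card
    = ((Finset.univ : Finset Bool) ×ˢ ((Finset.Icc 1 m ×ˢ Finset.Icc 1 m).filter
        fun q : ℕ × ℕ => m + 1 ≤ q.1 + q.2 ∧ q.1 + q.2 ≤ m + l)).card := by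
  have hm2 : (m + m) / 2 = m := by omega
  have hadj : ∀ x y : ZMod N, (circulant N (m + m)).Adj x y ↔
      (1 ≤ min (N - (y - x).val) ((y - x).val) ∧ min (N - (y - x).val) ((y - x).val) ≤ m) := by
    intro x y
    show (1 ≤ circDist x y ∧ circDist x y ≤ (m+m)/2) ↔ _
    rw [circDist_eq_min, hm2]
  have hne : ∀ x y : ZMod N, x ≠ y ↔ (x - v).val ≠ (y - v).val := by
    intro x y
    constructor
    · intro h hc
      apply h
      have := congrArg (fun t : ℕ => (t : ZMod N) + v) hc
      simpa [natCast_val'] using this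
    · intro h hc; subst hc; exact h rfl
  have hmem : ∀ p : ZMod N × ZMod N,
      (p ∈ Finset.univ.filter fun p : ZMod N × ZMod N =>
        (circulant N (m + m)).Adj v p.1 ∧ (circulant N (m + m)).Adj v p.2 ∧ p.1 ≠ p.2 ∧
          ¬ (circulant N (m + m)).Adj p.1 p.2) ↔ Q N m (p.1 - v).val (p.2 - v).val := by
    intro p
    simp only [Finset.mem_filter, Finset.mem_univ, true_and]
    rw [hadj v p.1, hadj v p.2, hadj p.1 p.2, hne p.1 p.2]
    have h2 : (p.2 - p.1).val = ((p.2 - v).val + (N - (p.1 - v).val)) % N := by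
      rw [show p.2 - p.1 = (p.2 - v) - (p.1 - v) by ring, sub_val']
    rw [h2]
    rfl
  apply Finset.card_bij'
    (i := fun p _ => if (p.1 - v).val ≤ m then ((true : Bool), ((p.1 - v).val, N - (p.2 - v).val))
      else (false, ((p.2 - v).val, N - (p.1 - v).val)))
    (j := fun q _ => cond q.1 (v + (q.2.1 : ZMod N), v + ((N - q.2.2 : ℕ) : ZMod N))
      (v + ((N - q.2.2 : ℕ) : ZMod N), v + (q.2.1 : ZMod N)))
  -- hi
  · intro p hp
    rw [hmem] at hp
    unfold Q at hp
    set a := (p.1 - v).val with ha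
    set b := (p.2 - v).val with hb
    have hav : a < N := ZMod.val_lt _
    have hbv : b < N := ZMod.val_lt _
    rw [mod2 (b + (N - a)) N (by omega)] at hp
    split_ifs with h
    · simp only [Finset.mem_product, Finset.mem_univ, Finset.mem_filter, Finset.mem_Icc, true_and]
      split_ifs at hp <;> omega
    · simp only [Finset.mem_product, Finset.mem_univ, Finset.mem_filter, Finset.mem_Icc, true_and]
      split_ifs at hp <;> omega
  -- hj
  · intro q hq
    obtain ⟨s, a, c⟩ := q
    simp only [Finset.mem_product, Finset.mem_univ, Finset.mem_filter, Finset.mem_Icc,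
      true_and] at hq
    obtain ⟨⟨⟨ha1, ha2⟩, hc1, hc2⟩, hs1, hs2⟩ := hq
    rw [hmem]
    have hval1 : ((v + (a : ZMod N)) - v).val = a := by
      rw [add_sub_cancel_left, ZMod.val_natCast, Nat.mod_eq_of_lt (by omega)]
    have hval2 : ((v + ((N - c : ℕ) : ZMod N)) - v).val = N - c := by
      rw [add_sub_cancel_left, ZMod.val_natCast, Nat.mod_eq_of_lt (by omega)]
    cases s
    · simp only [cond_false]
      unfold Q
      rw [hval1, hval2]
      rw [mod2 (a + (N - (N - c))) N (by omega)]
      split_ifs <;> omega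
    · simp only [cond_true]
      unfold Q
      rw [hval1, hval2]
      rw [mod2 ((N - c) + (N - a)) N (by omega)]
      split_ifs <;> omega
  -- left inverse
  · intro p hp
    rw [hmem] at hp
    unfold Q at hp
    set a := (p.1 - v).val with ha
    set b := (p.2 - v).val with hb
    have hav : a < N := ZMod.val_lt _
    have hbv : b < N := ZMod.val_lt _
    have e1 : v + ((a : ℕ) : ZMod N) = p.1 := by
      rw [ha, natCast_val']; ring
    have e2 : v + ((b : ℕ) : ZMod N) = p.2 := by
      rw [hb, natCast_val']; ring
    split_ifs with h
    · simp only [cond_true]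
      rw [show N - (N - b) = b by omega]
      exact Prod.ext e1 e2
    · simp only [cond_false]
      rw [show N - (N - a) = a by omega]
      exact Prod.ext e1 e2
  -- right inverse
  · intro q hq
    obtain ⟨s, a, c⟩ := q
    simp only [Finset.mem_product, Finset.mem_univ, Finset.mem_filter, Finset.mem_Icc,
      true_and] at hq
    obtain ⟨⟨⟨ha1, ha2⟩, hc1, hc2⟩, hs1, hs2⟩ := hq
    have hval1 : ((v + (a : ZMod N)) - v).val = a := by
      rw [add_sub_cancel_left, ZMod.val_natCast, Nat.mod_eq_of_lt (by omega)]
    have hval2 : ((v + ((N - c : ℕ) : ZMod N)) - v).val = N - c := by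
      rw [add_sub_cancel_left, ZMod.val_natCast, Nat.mod_eq_of_lt (by omega)]
    cases s
    · simp only [cond_false]
      rw [if_neg (by rw [hval2]; omega)]
      rw [hval1, hval2, show N - (N - c) = c by omega]
    · simp only [cond_true]
      rw [if_pos (by rw [hval1]; omega)]
      rw [hval1, hval2, show N - (N - c) = c by omega]



lemma sum_Icc_id (n : ℕ) : ∑ a ∈ Finset.Icc 1 n, a = n * (n + 1) / 2 := by
  have h : ∑ a ∈ Finset.Icc 1 n, a = ∑ a ∈ Finset.range (n + 1), a := by
    apply Finset.sum_subset
    · intro x hx; simp only [Finset.mem_Icc, Finset.mem_range] at *; omega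
    · intro x hx hx2; simp only [Finset.mem_Icc, Finset.mem_range] at *; omega
  rw [h, Finset.sum_range_id, Nat.add_sub_cancel, Nat.mul_comm]

lemma sum_min (l : ℕ) : ∀ m, l ≤ m → ∑ a ∈ Finset.Icc 1 m, min a l = m * l - l * (l - 1) / 2 := by
  intro m
  induction m with
  | zero => intro h; interval_cases l; simp
  | succ n ih =>
    intro h
    rw [Finset.sum_Icc_succ_top (by omega)]
    rcases le_or_gt l n with h' | h'
    · rw [ih h']
      have hmin : min (n + 1) l = l := by omega
      rw [hmin]
      have h2a : l * (l - 1) ≤ l * n := Nat.mul_le_mul_left l (by omega)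
      have h2b : l * n = n * l := Nat.mul_comm l n
      have h4 : (n + 1) * l = n * l + l := by ring
      have hev : Even (l * (l - 1)) := by
        rcases Nat.even_or_odd l with he | ho
        · exact he.mul_right _
        · exact ((Nat.Odd.sub_odd ho odd_one)).mul_left _
      have e5 : l * (l - 1) / 2 * 2 = l * (l - 1) := Nat.div_mul_cancel hev.two_dvd
      omega
    · have hl : l = n + 1 := by omega
      subst hl
      have hc : ∀ a ∈ Finset.Icc 1 n, min a (n + 1) = a := by
        intro a haa
        simp only [Finset.mem_Icc] at haa
        omega
      rw [Finset.sum_congr rfl hc, sum_Icc_id]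
      have h1 : 2 ∣ n * (n + 1) := (Nat.even_mul_succ_self n).two_dvd
      have e1 : n * (n + 1) / 2 * 2 = n * (n + 1) := Nat.div_mul_cancel h1
      have hmin : min (n + 1) (n + 1) = n + 1 := by omega
      rw [hmin]
      have e2 : (n + 1) * (n + 1) = n * (n + 1) + (n + 1) := by ring
      have e3 : (n + 1) * (n + 1 - 1) = n * (n + 1) := by
        rw [Nat.add_sub_cancel]; ring
      omega

lemma card_T (m l : ℕ) (hlm : l + 1 ≤ m) :
    ((Finset.Icc 1 m ×ˢ Finset.Icc 1 m).filter
      fun q : ℕ × ℕ => m + 1 ≤ q.1 + q.2 ∧ q.1 + q.2 ≤ m + l).card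
    = m * l - l * (l - 1) / 2 := by
  rw [Finset.card_eq_sum_card_fiberwise (f := Prod.fst) (t := Finset.Icc 1 m)
    (by intro x hx; simp only [Finset.mem_coe, Finset.mem_filter, Finset.mem_product, Finset.mem_Icc] at hx; simp [Finset.mem_Icc]; omega)]
  rw [← sum_min l m (by omega)]
  apply Finset.sum_congr rfl
  intro a haa
  simp only [Finset.mem_Icc] at haa
  have hfib : ((Finset.Icc 1 m ×ˢ Finset.Icc 1 m).filter
      (fun q : ℕ × ℕ => m + 1 ≤ q.1 + q.2 ∧ q.1 + q.2 ≤ m + l)).filter (fun q => q.1 = a)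
      = {a} ×ˢ Finset.Icc (m + 1 - a) (min m (m + l - a)) := by
    ext ⟨x, y⟩
    simp only [Finset.mem_filter, Finset.mem_product, Finset.mem_Icc, Finset.mem_singleton]
    constructor
    · rintro ⟨⟨⟨hx, hy⟩, hs⟩, rfl⟩
      omega
    · rintro ⟨rfl, hy⟩
      omega
  rw [hfib, Finset.card_product, Finset.card_singleton, Nat.card_Icc, one_mul]
  omega

lemma deg_eq (N m l : ℕ) [NeZero N] (hN : N = 2 * m + 1 + l) (hlm : l + 1 ≤ m) (v : ZMod N) :
    (circulant N (m + m)).degree v = m + m := by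
  have hm2 : (m + m) / 2 = m := by omega
  have hadj : ∀ x y : ZMod N, (circulant N (m + m)).Adj x y ↔
      (1 ≤ min (N - (y - x).val) ((y - x).val) ∧ min (N - (y - x).val) ((y - x).val) ≤ m) := by
    intro x y
    show (1 ≤ circDist x y ∧ circDist x y ≤ (m+m)/2) ↔ _
    rw [circDist_eq_min, hm2]
  rw [← SimpleGraph.card_neighborFinset_eq_degree]
  have hcard : ((circulant N (m + m)).neighborFinset v).card
      = (Finset.Icc 1 m ∪ Finset.Icc (m + 1 + l) (2 * m + l)).card := by
    apply Finset.card_bij' (i := fun x _ => (x - v).val)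
      (j := fun d _ => v + (d : ZMod N))
    · intro x hx
      rw [SimpleGraph.mem_neighborFinset, hadj] at hx
      have hv : (x - v).val < N := ZMod.val_lt _
      simp only [Finset.mem_union, Finset.mem_Icc]
      omega
    · intro d hd
      simp only [Finset.mem_union, Finset.mem_Icc] at hd
      rw [SimpleGraph.mem_neighborFinset, hadj]
      rw [add_sub_cancel_left, ZMod.val_natCast, Nat.mod_eq_of_lt (by omega)]
      omega
    · intro x hx
      rw [natCast_val']
      ring
    · intro d hd
      simp only [Finset.mem_union, Finset.mem_Icc] at hd
      rw [add_sub_cancel_left, ZMod.val_natCast, Nat.mod_eq_of_lt (by omega)]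
  rw [hcard, Finset.card_union_of_disjoint, Nat.card_Icc, Nat.card_Icc]
  · omega
  · rw [Finset.disjoint_left]
    intro x hx hx2
    simp only [Finset.mem_Icc] at hx hx2
    omega

end CircAux

theorem stmt2 (N k : ℕ) [NeZero N] (hke : Even k) (hk4 : 4 ≤ k)
    (hN1 : k + 1 ≤ N) (hN2 : 2 * N ≤ 3 * k) (l : ℕ) (hl : l = N - k - 1) (v : ZMod N) :
    (Finset.univ.filter fun p : ZMod N × ZMod N =>
        (circulant N k).Adj v p.1 ∧ (circulant N k).Adj v p.2 ∧ p.1 ≠ p.2 ∧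
          ¬ (circulant N k).Adj p.1 p.2).card / 2 = k * l / 2 - l * (l - 1) / 2 ∧
    localClustering (circulant N k) v =
      ((k.choose 2 : ℚ) - k * l / 2 + l * (l - 1) / 2) / (k.choose 2 : ℚ) := by
  obtain ⟨m, rfl⟩ := hke
  have hm2 : 2 ≤ m := by omega
  have hNeq : N = 2 * m + 1 + l := by omega
  have hlm : l + 1 ≤ m := by omega
  have hS : (Finset.univ.filter fun p : ZMod N × ZMod N =>
        (circulant N (m + m)).Adj v p.1 ∧ (circulant N (m + m)).Adj v p.2 ∧ p.1 ≠ p.2 ∧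
          ¬ (circulant N (m + m)).Adj p.1 p.2).card
      = 2 * (m * l - l * (l - 1) / 2) := by
    rw [CircAux.card_S N m l hNeq hlm v, Finset.card_product, CircAux.card_T m l hlm]
    simp
  have hev : Even (l * (l - 1)) := by
    rcases Nat.even_or_odd l with he | ho
    · exact he.mul_right _
    · exact ((Nat.Odd.sub_odd ho odd_one)).mul_left _
  have e5 : l * (l - 1) / 2 * 2 = l * (l - 1) := Nat.div_mul_cancel hev.two_dvd
  have hBle : l * (l - 1) / 2 ≤ m * l := by
    have h1 : l * (l - 1) ≤ l * m := Nat.mul_le_mul_left l (by omega)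
    have h2 : l * m = m * l := Nat.mul_comm l m
    omega
  constructor
  · rw [hS]
    have h1 : (m + m) * l = 2 * (m * l) := by ring
    rw [h1, Nat.mul_div_cancel_left _ (by norm_num : (0:ℕ) < 2),
      Nat.mul_div_cancel_left _ (by norm_num : (0:ℕ) < 2)]
  · have hdeg : (circulant N (m + m)).degree v = m + m := CircAux.deg_eq N m l hNeq hlm v
    have h1 : (Finset.univ.filter fun p : ZMod N × ZMod N =>
          (circulant N (m + m)).Adj v p.1 ∧ (circulant N (m + m)).Adj v p.2 ∧ p.1 ≠ p.2)
        = ((circulant N (m + m)).neighborFinset v).offDiag := by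
      ext p
      simp only [Finset.mem_filter, Finset.mem_univ, true_and, Finset.mem_offDiag,
        SimpleGraph.mem_neighborFinset]
    have hcard0 : (Finset.univ.filter fun p : ZMod N × ZMod N =>
          (circulant N (m + m)).Adj v p.1 ∧ (circulant N (m + m)).Adj v p.2 ∧ p.1 ≠ p.2).card
        = (m + m) * (m + m) - (m + m) := by
      rw [h1, Finset.offDiag_card, SimpleGraph.card_neighborFinset_eq_degree, hdeg]
    have hsplit := Finset.card_filter_add_card_filter_not
      (s := Finset.univ.filter fun p : ZMod N × ZMod N =>
        (circulant N (m + m)).Adj v p.1 ∧ (circulant N (m + m)).Adj v p.2 ∧ p.1 ≠ p.2)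
      (p := fun p => (circulant N (m + m)).Adj p.1 p.2)
    have hA : ((Finset.univ.filter fun p : ZMod N × ZMod N =>
          (circulant N (m + m)).Adj v p.1 ∧ (circulant N (m + m)).Adj v p.2 ∧ p.1 ≠ p.2).filter
          fun p => (circulant N (m + m)).Adj p.1 p.2)
        = Finset.univ.filter fun p : ZMod N × ZMod N =>
          (circulant N (m + m)).Adj v p.1 ∧ (circulant N (m + m)).Adj v p.2 ∧
            (circulant N (m + m)).Adj p.1 p.2 := by
      ext p
      simp only [Finset.mem_filter, Finset.mem_univ, true_and]
      constructor
      · rintro ⟨⟨h1, h2, h3⟩, h4⟩; exact ⟨h1, h2, h4⟩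
      · rintro ⟨h1, h2, h4⟩; exact ⟨⟨h1, h2, h4.ne⟩, h4⟩
    have hB : ((Finset.univ.filter fun p : ZMod N × ZMod N =>
          (circulant N (m + m)).Adj v p.1 ∧ (circulant N (m + m)).Adj v p.2 ∧ p.1 ≠ p.2).filter
          fun p => ¬ (circulant N (m + m)).Adj p.1 p.2)
        = Finset.univ.filter fun p : ZMod N × ZMod N =>
          (circulant N (m + m)).Adj v p.1 ∧ (circulant N (m + m)).Adj v p.2 ∧ p.1 ≠ p.2 ∧
            ¬ (circulant N (m + m)).Adj p.1 p.2 := by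
      ext p
      simp only [Finset.mem_filter, Finset.mem_univ, true_and]
      tauto
    rw [hA, hB, hS, hcard0] at hsplit
    have hne : nbrEdges (circulant N (m + m)) v = m * (m + m - 1) - (m * l - l * (l - 1) / 2) := by
      unfold nbrEdges
      have q1 : (m + m) * (m + m) = 2 * (m * (m + m)) := by ring
      have q2 : m * (m + m - 1) + m * 1 = m * (m + m) := by
        rw [← Nat.mul_add]; congr 1; omega
      have q4 : m * (l + 1) ≤ m * (m + m) := Nat.mul_le_mul_left m (by omega)
      have q5 : m * (l + 1) = m * l + m := by ring
      omega
    unfold localClustering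
    rw [hne, hdeg]
    have hch : (m + m).choose 2 = m * (m + m - 1) := by
      rw [Nat.choose_two_right]
      have : (m + m) * (m + m - 1) = 2 * (m * (m + m - 1)) := by
        rw [add_mul, two_mul]
      omega
    rw [hch]
    have hle1 : m * l - l * (l - 1) / 2 ≤ m * (m + m - 1) := by
      have q2 : m * (m + m - 1) + m * 1 = m * (m + m) := by
        rw [← Nat.mul_add]; congr 1; omega
      have q4 : m * (l + 1) ≤ m * (m + m) := Nat.mul_le_mul_left m (by omega)
      have q5 : m * (l + 1) = m * l + m := by ring
      omega
    rw [Nat.cast_sub hle1, Nat.cast_sub hBle]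
    congr 1
    have c1 : ((m * l : ℕ) : ℚ) = ((m + m : ℕ) : ℚ) * (l : ℚ) / 2 := by
      push_cast; ring
    have c2 : ((l * (l - 1) / 2 : ℕ) : ℚ) = (l : ℚ) * ((l : ℚ) - 1) / 2 := by
      rcases Nat.eq_zero_or_pos l with rfl | hp
      · simp
      · have h2 : ((l * (l - 1) / 2 : ℕ) : ℚ) * 2 = ((l * (l - 1) : ℕ) : ℚ) := by
          exact_mod_cast congrArg (fun t : ℕ => (t : ℚ)) e5
        have h3 : ((l * (l - 1) : ℕ) : ℚ) = (l : ℚ) * ((l : ℚ) - 1) := by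
          push_cast [Nat.cast_sub hp]
          ring
        linarith
    linarith
end

section
/- Let k ≥ 4 be even, N > 3k/2, and s ≥ 1. The graph C_{N,k,N,s}, obtained from C_{N,k} by attaching s pendant vertices to every vertex, has clustering coefficient equal to 3k(k-2)/(4(s+1)(k+s)(k+s-1)). -/
open scoped Classical

/-- Type I generalized circulant graph `C_{N,k,m,s}`: attach `s` pendant vertices to
each of the first `m` vertices of the circulant graph `C_{N,k}`. -/
def typeI (N k m s : ℕ) : SimpleGraph (ZMod N ⊕ Fin m × Fin s) where
  Adj a b :=
    (∃ i j : ZMod N, a = Sum.inl i ∧ b = Sum.inl j ∧ (circulant N k).Adj i j) ∨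
    (∃ (p : Fin m) (q : Fin s),
      (a = Sum.inl ((p : ℕ) : ZMod N) ∧ b = Sum.inr (p, q)) ∨
      (b = Sum.inl ((p : ℕ) : ZMod N) ∧ a = Sum.inr (p, q)))
  symm := ⟨by
    rintro a b (⟨i, j, rfl, rfl, h⟩ | ⟨p, q, h⟩)
    · exact Or.inl ⟨j, i, rfl, rfl, h.symm⟩
    · exact Or.inr ⟨p, q, h.symm⟩⟩
  loopless := ⟨by
    rintro a (⟨i, j, rfl, h2, h⟩ | ⟨p, q, ⟨h1, h2⟩ | ⟨h1, h2⟩⟩)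
    · cases h2; exact (circulant N k).irrefl h
    · subst h1; simp at h2
    · subst h1; simp at h2⟩

lemma val_intCast_of_lt {N : ℕ} [NeZero N] {d : ℤ} (h0 : 0 ≤ d) (h1 : d < N) :
    ((d : ZMod N)).val = d.toNat := by
  have := ZMod.val_intCast (n := N) d
  rw [Int.emod_eq_of_lt h0 h1] at this
  omega

lemma neg_cast_eq {N : ℕ} [NeZero N] (d : ℤ) :
    (((N : ℤ) - d : ℤ) : ZMod N) = ((-d : ℤ) : ZMod N) := by
  push_cast
  simp [ZMod.natCast_self]

lemma circ_adj_iff {N h : ℕ} [NeZero N] (hN : 3 * h < N)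
    {x y : ℤ} (hd : |x - y| ≤ 2 * h) :
    (circulant N (2 * h)).Adj (x : ZMod N) (y : ZMod N) ↔ x ≠ y ∧ |x - y| ≤ (h : ℤ) := by
  have hvals : ∀ d : ℤ, 0 < d → d ≤ 2 * h →
      ((d : ZMod N)).val = d.toNat ∧ (((-d : ℤ)) : ZMod N).val = ((N : ℤ) - d).toNat := by
    intro d hd0 hd2
    refine ⟨val_intCast_of_lt (by omega) (by omega), ?_⟩
    rw [← neg_cast_eq]
    exact val_intCast_of_lt (by omega) (by omega)
  have hcast : (x : ZMod N) - (y : ZMod N) = ((x - y : ℤ) : ZMod N) := by push_cast; ring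
  have hcast' : (y : ZMod N) - (x : ZMod N) = ((y - x : ℤ) : ZMod N) := by push_cast; ring
  show (1 ≤ circDist _ _ ∧ circDist _ _ ≤ 2 * h / 2) ↔ _
  rw [show 2 * h / 2 = h by omega]
  unfold circDist
  rw [hcast, hcast']
  rcases lt_trichotomy x y with hlt | rfl | hlt
  · have h1 := hvals (y - x) (by omega) (by have := abs_le.mp hd; omega)
    rw [abs_sub_comm] at hd ⊢
    rw [abs_of_pos (show (0:ℤ) < y - x by omega)] at hd ⊢
    rw [show ((x - y : ℤ)) = -(y - x) by ring, h1.1, h1.2]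
    omega
  · simp
  · have h1 := hvals (x - y) (by omega) (by have := abs_le.mp hd; omega)
    rw [abs_of_pos (show (0:ℤ) < x - y by omega)] at hd ⊢
    rw [show ((y - x : ℤ)) = -(x - y) by ring, h1.1, h1.2]
    omega

noncomputable abbrev Trep (h : ℕ) : Finset ℤ := (Finset.Icc (-(h:ℤ)) h).erase 0

lemma card_Trep (h : ℕ) : (Trep h).card = 2 * h := by
  rw [Finset.card_erase_of_mem (by simp), Int.card_Icc]
  omega

lemma inner_card_s9 (h : ℕ) {a : ℤ} (ha : a ∈ Trep h) :
    ((((Trep h).filter fun b => a ≠ b ∧ |a - b| ≤ (h:ℤ)).card : ℕ) : ℤ)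
      = 2 * h - |a| - 1 := by
  rw [Finset.mem_erase, Finset.mem_Icc] at ha
  obtain ⟨ha0, hal, har⟩ := ha
  rcases lt_or_gt_of_ne ha0 with hneg | hpos
  · have hset : ((Trep h).filter fun b => a ≠ b ∧ |a - b| ≤ (h:ℤ))
        = ((Finset.Icc (-(h:ℤ)) (a + h)).erase 0).erase a := by
      ext b
      simp only [Trep, Finset.mem_erase, Finset.mem_filter, Finset.mem_Icc, abs_le]
      omega
    rw [hset, Finset.card_erase_of_mem, Finset.card_erase_of_mem, Int.card_Icc,
      abs_of_neg hneg]
    · omega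
    · simp only [Finset.mem_Icc]; omega
    · simp only [Finset.mem_erase, Finset.mem_Icc]; omega
  · have hset : ((Trep h).filter fun b => a ≠ b ∧ |a - b| ≤ (h:ℤ))
        = ((Finset.Icc (a - h) (h:ℤ)).erase 0).erase a := by
      ext b
      simp only [Trep, Finset.mem_erase, Finset.mem_filter, Finset.mem_Icc, abs_le]
      omega
    rw [hset, Finset.card_erase_of_mem, Finset.card_erase_of_mem, Int.card_Icc,
      abs_of_pos hpos]
    · omega
    · simp only [Finset.mem_Icc]; omega
    · simp only [Finset.mem_erase, Finset.mem_Icc]; omega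

lemma sum_abs_Icc (h : ℕ) : ∑ a ∈ Finset.Icc (-(h:ℤ)) h, |a| = h * (h + 1) := by
  induction h with
  | zero => simp
  | succ n ih =>
      have hins : Finset.Icc (-((n+1:ℕ):ℤ)) ((n+1:ℕ):ℤ)
          = insert (-((n:ℤ)+1)) (insert ((n:ℤ)+1) (Finset.Icc (-(n:ℤ)) (n:ℤ))) := by
        ext b
        simp only [Finset.mem_Icc, Finset.mem_insert]
        push_cast
        omega
      rw [hins, Finset.sum_insert, Finset.sum_insert, ih]
      · rw [abs_neg, abs_of_nonneg (by positivity)]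
        push_cast
        ring
      · simp only [Finset.mem_Icc]; omega
      · simp only [Finset.mem_insert, Finset.mem_Icc]
        push_cast
        omega

lemma card_pairs (h : ℕ) :
    (((((Trep h) ×ˢ (Trep h)).filter
        fun p : ℤ × ℤ => p.1 ≠ p.2 ∧ |p.1 - p.2| ≤ (h:ℤ)).card : ℕ) : ℤ)
      = 3 * h * h - 3 * h := by
  classical
  rw [Finset.card_filter, Finset.sum_product]
  have hstep : ∀ a ∈ Trep h,
      ((∑ b ∈ Trep h, if a ≠ b ∧ |a - b| ≤ (h:ℤ) then 1 else 0 : ℕ) : ℤ)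
        = 2 * h - |a| - 1 := by
    intro a ha
    rw [← Finset.card_filter]
    exact inner_card_s9 h ha
  rw [Nat.cast_sum, Finset.sum_congr rfl hstep]
  have h2 : ∑ a ∈ Trep h, (2 * (h:ℤ) - |a| - 1)
      = ∑ a ∈ Trep h, ((2 * (h:ℤ) - 1) - |a|) := by
    apply Finset.sum_congr rfl; intros; ring
  rw [h2, Finset.sum_sub_distrib, Finset.sum_const, Finset.sum_erase _ (abs_zero),
    sum_abs_Icc, card_Trep]
  push_cast
  ring

lemma circDist_sub {N : ℕ} (i x y : ZMod N) :
    circDist (x - i) (y - i) = circDist x y := by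
  unfold circDist
  congr 1 <;> congr 1 <;> ring

lemma adj_sub_iff {N k : ℕ} (i x y : ZMod N) :
    (circulant N k).Adj (x - i) (y - i) ↔ (circulant N k).Adj x y := by
  show (1 ≤ circDist _ _ ∧ _) ↔ (1 ≤ circDist _ _ ∧ _)
  rw [circDist_sub]

section main
variable {N h : ℕ} [NeZero N]

lemma cast_inj_on (hN : 3 * h < N) {a b : ℤ} (ha : |a| ≤ (h:ℤ)) (hb : |b| ≤ (h:ℤ))
    (hab : (a : ZMod N) = (b : ZMod N)) : a = b := by
  have hdvd : (N : ℤ) ∣ a - b := by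
    rwa [← ZMod.intCast_zmod_eq_zero_iff_dvd, Int.cast_sub, sub_eq_zero]
  have h1 : |a - b| < (N : ℤ) := by
    have := abs_sub a b
    have : |a - b| ≤ |a| + |b| := abs_sub _ _
    push_cast at *
    omega
  have := Int.eq_zero_of_abs_lt_dvd hdvd h1
  omega

lemma mem_Trep_abs {a : ℤ} (ha : a ∈ Trep h) : a ≠ 0 ∧ |a| ≤ (h:ℤ) := by
  rw [Finset.mem_erase, Finset.mem_Icc] at ha
  constructor
  · exact ha.1
  · rw [abs_le]; exact ha.2

lemma adj_zero_iff (hN : 3 * h < N) (x : ZMod N) :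
    (circulant N (2 * h)).Adj 0 x ↔ ∃ a ∈ Trep h, (a : ZMod N) = x := by
  constructor
  · intro hadj
    obtain ⟨h1, h2⟩ := hadj
    unfold circDist at h1 h2
    rw [zero_sub, sub_zero] at h1 h2
    rw [show 2 * h / 2 = h by omega] at h2
    have hx0 : x ≠ 0 := by
      rintro rfl; simp at h1
    haveI : NeZero x := ⟨hx0⟩
    have hneg : (-x).val = N - x.val := ZMod.val_neg_of_ne_zero x
    have hxv : x.val < N := ZMod.val_lt x
    have hxv1 : 1 ≤ x.val := by
      have : x.val ≠ 0 := fun hc => hx0 ((ZMod.val_eq_zero x).mp hc)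
      omega
    have hcast : ((x.val : ℤ) : ZMod N) = x := by
      push_cast
      simp [ZMod.natCast_val, ZMod.cast_id]
    rcases le_or_gt x.val h with hle | hgt
    · refine ⟨(x.val : ℤ), ?_, hcast⟩
      rw [Finset.mem_erase, Finset.mem_Icc]
      constructor
      · exact_mod_cast Nat.one_le_iff_ne_zero.mp hxv1 ∘ fun hc => by exact_mod_cast hc
      · constructor <;> [omega; exact_mod_cast hle]
    · refine ⟨(x.val : ℤ) - N, ?_, ?_⟩
      · rw [Finset.mem_erase, Finset.mem_Icc]
        rw [hneg] at h1 h2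
        refine ⟨by omega, by omega, by omega⟩
      · push_cast
        rw [ZMod.natCast_self]
        simpa [ZMod.natCast_val, ZMod.cast_id] using hcast
  · rintro ⟨a, ha, rfl⟩
    obtain ⟨ha0, haabs⟩ := mem_Trep_abs ha
    have := (circ_adj_iff (N := N) hN (x := (0:ℤ)) (y := a) (by rw [zero_sub, abs_neg]; omega)).mpr
      ⟨fun hc => ha0 hc.symm, by rw [zero_sub, abs_neg]; omega⟩
    simpa using this


lemma pairset_zero_eq (hN : 3 * h < N) :
    (Finset.univ.filter fun p : ZMod N × ZMod N =>
        (circulant N (2*h)).Adj 0 p.1 ∧ (circulant N (2*h)).Adj 0 p.2 ∧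
          (circulant N (2*h)).Adj p.1 p.2)
      = ((Trep h ×ˢ Trep h).filter fun p : ℤ × ℤ => p.1 ≠ p.2 ∧ |p.1 - p.2| ≤ (h:ℤ)).image
          (fun p : ℤ × ℤ => ((p.1 : ZMod N), (p.2 : ZMod N))) := by
  ext ⟨x, y⟩
  simp only [Finset.mem_filter, Finset.mem_univ, true_and, Finset.mem_image,
    Finset.mem_product, Prod.exists, Prod.mk.injEq]
  constructor
  · rintro ⟨hx, hy, hxy⟩
    obtain ⟨a, ha, rfl⟩ := (adj_zero_iff hN x).mp hx
    obtain ⟨b, hb, rfl⟩ := (adj_zero_iff hN y).mp hy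
    obtain ⟨ha0, haabs⟩ := mem_Trep_abs ha
    obtain ⟨hb0, hbabs⟩ := mem_Trep_abs hb
    have habs : |a - b| ≤ 2 * (h:ℤ) := le_trans (abs_sub a b) (by omega)
    have := (circ_adj_iff hN habs).mp hxy
    exact ⟨a, b, ⟨⟨ha, hb⟩, this⟩, rfl, rfl⟩
  · rintro ⟨a, b, ⟨⟨ha, hb⟩, hne, hle⟩, rfl, rfl⟩
    obtain ⟨ha0, haabs⟩ := mem_Trep_abs ha
    obtain ⟨hb0, hbabs⟩ := mem_Trep_abs hb
    have habs : |a - b| ≤ 2 * (h:ℤ) := le_trans (abs_sub a b) (by omega)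
    refine ⟨(adj_zero_iff hN _).mpr ⟨a, ha, rfl⟩, (adj_zero_iff hN _).mpr ⟨b, hb, rfl⟩, ?_⟩
    exact (circ_adj_iff hN habs).mpr ⟨hne, hle⟩

lemma pairset_zero_card (hN : 3 * h < N) :
    (Finset.univ.filter fun p : ZMod N × ZMod N =>
        (circulant N (2*h)).Adj 0 p.1 ∧ (circulant N (2*h)).Adj 0 p.2 ∧
          (circulant N (2*h)).Adj p.1 p.2).card
      = ((Trep h ×ˢ Trep h).filter fun p : ℤ × ℤ => p.1 ≠ p.2 ∧ |p.1 - p.2| ≤ (h:ℤ)).card := by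
  rw [pairset_zero_eq hN]
  apply Finset.card_image_of_injOn
  rintro ⟨a, b⟩ hab ⟨c, d⟩ hcd heq
  simp only [Finset.coe_filter, Set.mem_setOf_eq, Finset.mem_product] at hab hcd
  obtain ⟨⟨ha, hb⟩, -⟩ := hab
  obtain ⟨⟨hc, hd⟩, -⟩ := hcd
  simp only [Prod.mk.injEq] at heq
  have e1 := cast_inj_on (N := N) hN (mem_Trep_abs ha).2 (mem_Trep_abs hc).2 heq.1
  have e2 := cast_inj_on (N := N) hN (mem_Trep_abs hb).2 (mem_Trep_abs hd).2 heq.2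
  simp [e1, e2]

lemma pairset_translate_card (i : ZMod N) (k : ℕ) :
    (Finset.univ.filter fun p : ZMod N × ZMod N =>
        (circulant N k).Adj i p.1 ∧ (circulant N k).Adj i p.2 ∧
          (circulant N k).Adj p.1 p.2).card
      = (Finset.univ.filter fun p : ZMod N × ZMod N =>
        (circulant N k).Adj 0 p.1 ∧ (circulant N k).Adj 0 p.2 ∧
          (circulant N k).Adj p.1 p.2).card := by
  have e : ∀ x : ZMod N, (circulant N k).Adj i x ↔ (circulant N k).Adj 0 (x - i) := fun x => by
    rw [show (0:ZMod N) = i - i by ring]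
    exact (adj_sub_iff i i x).symm
  have e2 : ∀ x y : ZMod N, (circulant N k).Adj x y ↔ (circulant N k).Adj (x - i) (y - i) :=
    fun x y => (adj_sub_iff i x y).symm
  apply Finset.card_nbij' (fun p => (p.1 - i, p.2 - i)) (fun p => (p.1 + i, p.2 + i))
  · rintro ⟨x, y⟩ hp
    simp only [Finset.mem_coe, Finset.mem_filter, Finset.mem_univ, true_and] at hp ⊢
    exact ⟨(e x).mp hp.1, (e y).mp hp.2.1, (e2 x y).mp hp.2.2⟩
  · rintro ⟨x, y⟩ hp
    simp only [Finset.mem_coe, Finset.mem_filter, Finset.mem_univ, true_and] at hp ⊢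
    refine ⟨?_, ?_, ?_⟩
    · rw [e (x + i), add_sub_cancel_right]; exact hp.1
    · rw [e (y + i), add_sub_cancel_right]; exact hp.2.1
    · rw [e2 (x + i) (y + i), add_sub_cancel_right, add_sub_cancel_right]; exact hp.2.2
  · rintro ⟨x, y⟩ _; simp
  · rintro ⟨x, y⟩ _; simp

lemma nbr_zero_card (hN : 3 * h < N) :
    (Finset.univ.filter fun x : ZMod N => (circulant N (2*h)).Adj 0 x).card = 2 * h := by
  have : (Finset.univ.filter fun x : ZMod N => (circulant N (2*h)).Adj 0 x)
      = (Trep h).image (fun a : ℤ => (a : ZMod N)) := by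
    ext x
    simp only [Finset.mem_filter, Finset.mem_univ, true_and, Finset.mem_image]
    rw [adj_zero_iff hN]
  rw [this, Finset.card_image_of_injOn, card_Trep]
  intro a ha b hb heq
  exact cast_inj_on (N := N) hN (mem_Trep_abs ha).2 (mem_Trep_abs hb).2 heq

lemma nbr_translate_card (i : ZMod N) (k : ℕ) :
    (Finset.univ.filter fun x : ZMod N => (circulant N k).Adj i x).card
      = (Finset.univ.filter fun x : ZMod N => (circulant N k).Adj 0 x).card := by
  have e : ∀ x : ZMod N, (circulant N k).Adj i x ↔ (circulant N k).Adj 0 (x - i) := fun x => by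
    rw [show (0:ZMod N) = i - i by ring]
    exact (adj_sub_iff i i x).symm
  apply Finset.card_nbij' (fun x => x - i) (fun x => x + i)
  · intro x hx
    simp only [Finset.mem_coe, Finset.mem_filter, Finset.mem_univ, true_and] at hx ⊢
    exact (e x).mp hx
  · intro x hx
    simp only [Finset.mem_coe, Finset.mem_filter, Finset.mem_univ, true_and] at hx ⊢
    rw [e (x + i), add_sub_cancel_right]
    exact hx
  · intro x _; simp
  · intro x _; simp

end main

section typeIside
variable {N k s : ℕ} [NeZero N]

lemma typeI_adj_inl_inl {m : ℕ} (x y : ZMod N) :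
    (typeI N k m s).Adj (Sum.inl x) (Sum.inl y) ↔ (circulant N k).Adj x y := by
  constructor
  · rintro (⟨i, j, hx, hy, hadj⟩ | ⟨p, q, ⟨h1, h2⟩ | ⟨h1, h2⟩⟩)
    · cases hx; cases hy; exact hadj
    · exact nomatch h2
    · exact nomatch h2
  · intro hadj
    exact Or.inl ⟨x, y, rfl, rfl, hadj⟩

lemma typeI_adj_inl_inr {m : ℕ} (x : ZMod N) (p : Fin m) (q : Fin s) :
    (typeI N k m s).Adj (Sum.inl x) (Sum.inr (p, q)) ↔ ((p : ℕ) : ZMod N) = x := by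
  constructor
  · rintro (⟨i, j, hx, hy, hadj⟩ | ⟨p', q', ⟨h1, h2⟩ | ⟨h1, h2⟩⟩)
    · exact nomatch hy
    · rw [Sum.inr.injEq, Prod.mk.injEq] at h2
      obtain ⟨rfl, rfl⟩ := h2
      rw [Sum.inl.injEq] at h1
      exact h1.symm
    · exact nomatch h1
  · rintro rfl
    exact Or.inr ⟨p, q, Or.inl ⟨rfl, rfl⟩⟩

lemma typeI_adj_inr {m : ℕ} (p : Fin m) (q : Fin s) (w : ZMod N ⊕ Fin m × Fin s)
    (h : (typeI N k m s).Adj (Sum.inr (p, q)) w) : w = Sum.inl ((p : ℕ) : ZMod N) := by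
  rcases h with ⟨i, j, hx, hy, hadj⟩ | ⟨p', q', ⟨h1, h2⟩ | ⟨h1, h2⟩⟩
  · exact nomatch hx
  · exact nomatch h1
  · rw [Sum.inr.injEq, Prod.mk.injEq] at h2
    obtain ⟨rfl, rfl⟩ := h2
    exact h1

lemma nbrEdges_inr (p : Fin N) (q : Fin s) :
    nbrEdges (typeI N k N s) (Sum.inr (p, q)) = 0 := by
  unfold nbrEdges
  convert Nat.zero_div 2
  rw [Finset.card_eq_zero, Finset.filter_eq_empty_iff]
  rintro ⟨x, y⟩ -
  rintro ⟨h1, h2, h3⟩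
  have e1 := typeI_adj_inr p q x h1
  have e2 := typeI_adj_inr p q y h2
  subst e1; subst e2
  exact (typeI N k N s).irrefl h3

lemma localClustering_inr (p : Fin N) (q : Fin s) :
    localClustering (typeI N k N s) (Sum.inr (p, q)) = 0 := by
  unfold localClustering
  rw [nbrEdges_inr]
  simp

lemma nbrEdges_inl (i : ZMod N) :
    nbrEdges (typeI N k N s) (Sum.inl i)
      = ((Finset.univ.filter fun p : ZMod N × ZMod N =>
          (circulant N k).Adj i p.1 ∧ (circulant N k).Adj i p.2 ∧
            (circulant N k).Adj p.1 p.2).card) / 2 := by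
  unfold nbrEdges
  congr 1
  have himg : (Finset.univ.filter fun p : (ZMod N ⊕ Fin N × Fin s) × (ZMod N ⊕ Fin N × Fin s) =>
      (typeI N k N s).Adj (Sum.inl i) p.1 ∧ (typeI N k N s).Adj (Sum.inl i) p.2 ∧
        (typeI N k N s).Adj p.1 p.2)
      = (Finset.univ.filter fun p : ZMod N × ZMod N =>
          (circulant N k).Adj i p.1 ∧ (circulant N k).Adj i p.2 ∧
            (circulant N k).Adj p.1 p.2).image
          (fun p => (Sum.inl p.1, Sum.inl p.2)) := by
    ext ⟨x, y⟩
    simp only [Finset.mem_filter, Finset.mem_univ, true_and, Finset.mem_image, Prod.exists,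
      Prod.mk.injEq]
    constructor
    · rintro ⟨h1, h2, h3⟩
      cases x with
      | inr pq =>
          obtain ⟨p, q⟩ := pq
          have hpi := (typeI_adj_inl_inr i p q).mp h1
          have hy := typeI_adj_inr p q y h3
          rw [hpi] at hy
          subst hy
          exact absurd h2 (typeI N k N s).irrefl
      | inl a =>
        cases y with
        | inr pq =>
            obtain ⟨p, q⟩ := pq
            have hpi := (typeI_adj_inl_inr i p q).mp h2
            have hx := typeI_adj_inr p q (Sum.inl a) (h3.symm)
            rw [hpi] at hx
            rw [Sum.inl.injEq] at hx
            subst hx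
            exact absurd h1 (typeI N k N s).irrefl
        | inl b =>
            exact ⟨a, b, ⟨(typeI_adj_inl_inl i a).mp h1, (typeI_adj_inl_inl i b).mp h2,
              (typeI_adj_inl_inl a b).mp h3⟩, rfl, rfl⟩
    · rintro ⟨a, b, ⟨ha, hb, hab⟩, rfl, rfl⟩
      exact ⟨(typeI_adj_inl_inl i a).mpr ha, (typeI_adj_inl_inl i b).mpr hb,
        (typeI_adj_inl_inl a b).mpr hab⟩
  rw [himg]
  apply Finset.card_image_of_injOn
  rintro ⟨a, b⟩ - ⟨c, d⟩ - heq
  simp only [Prod.mk.injEq, Sum.inl.injEq] at heq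
  simp [heq.1, heq.2]

lemma degree_inl (i : ZMod N) :
    (typeI N k N s).degree (Sum.inl i)
      = (Finset.univ.filter fun x : ZMod N => (circulant N k).Adj i x).card + s := by
  classical
  set pi : Fin N := ⟨i.val, ZMod.val_lt i⟩ with hpi
  have hpicast : ((pi : ℕ) : ZMod N) = i := by
    simp [hpi, ZMod.natCast_val, ZMod.cast_id]
  have hnbr : (typeI N k N s).neighborFinset (Sum.inl i)
      = ((Finset.univ.filter fun x : ZMod N => (circulant N k).Adj i x).image Sum.inl)
        ∪ ((Finset.univ : Finset (Fin s)).image fun q => Sum.inr (pi, q)) := by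
    ext w
    simp only [SimpleGraph.mem_neighborFinset, Finset.mem_union, Finset.mem_image,
      Finset.mem_filter, Finset.mem_univ, true_and]
    cases w with
    | inl j =>
        rw [typeI_adj_inl_inl]
        constructor
        · intro hadj
          exact Or.inl ⟨j, hadj, rfl⟩
        · rintro (⟨x, hx, hxe⟩ | ⟨q, hq⟩)
          · rw [Sum.inl.injEq] at hxe; subst hxe; exact hx
          · exact nomatch hq
    | inr pq =>
        obtain ⟨p, q⟩ := pq
        rw [typeI_adj_inl_inr]
        constructor
        · intro hpx
          refine Or.inr ⟨q, ?_⟩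
          have hval : p = pi := by
            apply Fin.ext
            have : ((p : ℕ) : ZMod N).val = i.val := by rw [hpx]
            rw [ZMod.val_cast_of_lt p.isLt] at this
            simp [hpi, this]
          rw [hval]
        · rintro (⟨x, hx, hxe⟩ | ⟨q', hq⟩)
          · exact nomatch hxe
          · rw [Sum.inr.injEq, Prod.mk.injEq] at hq
            rw [← hq.1]
            exact hpicast
  rw [SimpleGraph.degree, hnbr, Finset.card_union_of_disjoint, Finset.card_image_of_injective _
    Sum.inl_injective, Finset.card_image_of_injective, Finset.card_univ, Fintype.card_fin]
  · intro a b hab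
    simpa using hab
  · rw [Finset.disjoint_left]
    rintro w hw hw2
    simp only [Finset.mem_image, Finset.mem_filter, Finset.mem_univ, true_and] at hw hw2
    obtain ⟨x, -, rfl⟩ := hw
    obtain ⟨q, hq⟩ := hw2
    exact nomatch hq

end typeIside

theorem stmt9 (N k s : ℕ) [NeZero N] (hke : Even k) (hk4 : 4 ≤ k) (hN : 2 * N > 3 * k)
    (hs : 1 ≤ s) :
    clusteringCoeff (typeI N k N s) =
      3 * k * ((k : ℚ) - 2) / (4 * ((s : ℚ) + 1) * ((k : ℚ) + s) * ((k : ℚ) + s - 1)) := by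
  obtain ⟨h, hh⟩ := hke
  have hk2 : k = 2 * h := by omega
  subst hk2
  have hN3 : 3 * h < N := by omega
  have hh2 : 2 ≤ h := by omega
  -- local clustering of circulant-part vertices
  have hE : ∀ i : ZMod N, (nbrEdges (typeI N (2*h) N s) (Sum.inl i) : ℚ)
      = (3*(h:ℚ)*h - 3*h)/2 := by
    intro i
    rw [nbrEdges_inl]
    set C := (Finset.univ.filter fun p : ZMod N × ZMod N =>
        (circulant N (2*h)).Adj i p.1 ∧ (circulant N (2*h)).Adj i p.2 ∧
          (circulant N (2*h)).Adj p.1 p.2).card with hC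
    have hCi : (C : ℤ) = 3*h*h - 3*h := by
      rw [hC, pairset_translate_card, pairset_zero_card hN3]
      exact card_pairs h
    have heven : (2 : ℤ) ∣ (C : ℤ) := by
      rw [hCi]
      obtain ⟨t, ht⟩ := Int.even_mul_succ_self ((h:ℤ) - 1)
      exact ⟨3*t, by linear_combination 3 * ht⟩
    have h2C : 2 ∣ C := by exact_mod_cast heven
    obtain ⟨m, hm⟩ := h2C
    rw [hm, Nat.mul_div_cancel_left m (by norm_num)]
    have hmz : (2*(m:ℤ)) = 3*(h:ℤ)*h - 3*h := by
      rw [← hCi, hm]; push_cast; ring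
    rw [eq_div_iff (two_ne_zero)]
    have : ((m:ℚ)) * 2 = ((2*(m:ℤ) : ℤ) : ℚ) := by push_cast; ring
    rw [this, hmz]
    push_cast
    ring
  have hdeg : ∀ i : ZMod N, (typeI N (2*h) N s).degree (Sum.inl i) = 2*h + s := by
    intro i
    rw [degree_inl, nbr_translate_card, nbr_zero_card hN3]
  set c : ℚ := ((3*(h:ℚ)*h - 3*h)/2) / (((2*h + s).choose 2 : ℕ) : ℚ) with hc
  have hlocal : ∀ i : ZMod N, localClustering (typeI N (2*h) N s) (Sum.inl i) = c := by
    intro i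
    unfold localClustering
    rw [hE i, hdeg i]
  unfold clusteringCoeff
  rw [Fintype.sum_sum_type]
  have hz : ∑ pq : Fin N × Fin s, localClustering (typeI N (2*h) N s) (Sum.inr pq) = 0 := by
    apply Finset.sum_eq_zero
    rintro ⟨p, q⟩ -
    exact localClustering_inr p q
  have h1 : ∑ i : ZMod N, localClustering (typeI N (2*h) N s) (Sum.inl i) = (N : ℚ) * c := by
    rw [Finset.sum_congr rfl (fun i _ => hlocal i), Finset.sum_const, Finset.card_univ,
      ZMod.card, nsmul_eq_mul]
  rw [hz, h1, add_zero]
  have hcard : (Fintype.card (ZMod N ⊕ Fin N × Fin s) : ℚ) = (N : ℚ) * (1 + s) := by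
    rw [Fintype.card_sum, Fintype.card_prod, Fintype.card_fin, Fintype.card_fin, ZMod.card]
    push_cast
    ring
  rw [hcard, hc, Nat.cast_choose_two]
  have hN0 : (N : ℚ) ≠ 0 := Nat.cast_ne_zero.mpr (NeZero.ne N)
  have hs0 : (1 : ℚ) + s ≠ 0 := by positivity
  have hks : ((2*h + s : ℕ) : ℚ) ≠ 0 := by positivity
  have hks1 : ((2*h + s : ℕ) : ℚ) - 1 ≠ 0 := by
    have : (1:ℚ) ≤ ((2*h + s : ℕ) : ℚ) - 1 := by
      push_cast
      have : (2:ℚ) ≤ (h:ℚ) := by exact_mod_cast hh2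
      have : (1:ℚ) ≤ (s:ℚ) := by exact_mod_cast hs
      nlinarith [show (2:ℚ) ≤ (h:ℚ) from by exact_mod_cast hh2]
    intro hcon
    rw [hcon] at this
    norm_num at this
  have hs0' : (s : ℚ) + 1 ≠ 0 := by positivity
  push_cast at hks hks1 ⊢
  field_simp
  ring
end
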